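/- Assume the Schrödinger-operator setup stated in the context. There exist constants c₁, c₂ > 0, depending only on M, m, 𝐞 and C (in particular independent of x₀, L, 𝓔₁, 𝓔₂), such that for every x₀ ≥ 2 there is L₀ with the following property: for all integers L ≥ L₀, every λ ≤ 0, and every eigenfunction ψ of the Dirichlet Schrödinger operator −d²/dx² + Ṽ on (x₀, ∞) with eigenvalue λ, one has ( ∫_{x₀ < x < c₁·L²} (|ψ(x)|² + |ψ'(x)|²) dx )^{1/2} ≤ e^{−c₂·L}·( ∫_{x₀}^{∞} |ψ(x)|² dx )^{1/2}. -/

import Mathlib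

/-!
Put `K = 2Mm² + C`, `q = K/L` and `a = L²/(10K)`. On `(x₀, 5a]` the centrifugal term
dominates, so `Ṽ - λ ≥ q²` and `ψ'' = (Ṽ - λ) ψ` there. Since `(ψψ')' = ψ'² + (Ṽ - λ) ψ² ≥ 0`
and `ψ(x₀⁺) = 0`, we get `ψψ' ≥ 0`; hence `ψ²` and `ψ'²` increase on `(x₀, 5a]`, while
`(ψ' + qψ)²` grows at least like `e^{2qx}`. So on `(x₀, a]` the quantity `ψ² + ψ'²` is at most
`3 e^{-2qa} ψ(4a)² = 3 e^{-L/5} ψ(4a)²`, and `a ψ(4a)²` is at most the mass of `ψ²` on `(4a, 5a)`.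
-/

open MeasureTheory Filter Set Topology

/-- The reference hydrogen-like potential with error terms `𝓔₁ = E1`, `𝓔₂ = E2`. -/
noncomputable def Vtil (M m E : ℝ) (L : ℕ) (E1 E2 : ℝ → ℝ) (x : ℝ) : ℝ :=
  -(2 * M * m ^ 2) / x + (((L : ℝ) * ((L : ℝ) + 1) + E ^ 2 * m ^ 2) / x ^ 2) * (1 + E2 x)
    + E1 x

/-- `ψ` is an eigenfunction of the Dirichlet Schrödinger operator `−d²/dx² + W`
on `(x₀, ∞)` with eigenvalue `lam`: nonzero, `C²`, square-integrable together with its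
first two derivatives, vanishing at `x₀⁺`, and solving `−ψ'' + W·ψ = lam·ψ`. -/
def IsEigenfunction (W : ℝ → ℝ) (x₀ lam : ℝ) (ψ : ℝ → ℝ) : Prop :=
  (∃ x ∈ Set.Ioi x₀, ψ x ≠ 0) ∧
  ContDiffOn ℝ 2 ψ (Set.Ioi x₀) ∧
  (∫⁻ x in Set.Ioi x₀, ENNReal.ofReal (ψ x ^ 2)) < ⊤ ∧
  (∫⁻ x in Set.Ioi x₀, ENNReal.ofReal (deriv ψ x ^ 2)) < ⊤ ∧
  (∫⁻ x in Set.Ioi x₀, ENNReal.ofReal (deriv (deriv ψ) x ^ 2)) < ⊤ ∧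
  Filter.Tendsto ψ (nhdsWithin x₀ (Set.Ioi x₀)) (nhds 0) ∧
  ∀ x ∈ Set.Ioi x₀, -deriv (deriv ψ) x + W x * ψ x = lam * ψ x

theorem monotoneOn_of_hasDerivAt_nonneg {D : Set ℝ} (hD : Convex ℝ D) {f f' : ℝ → ℝ}
    (hf : ∀ x ∈ D, HasDerivAt f (f' x) x) (hf' : ∀ x ∈ D, 0 ≤ f' x) : MonotoneOn f D :=
  monotoneOn_of_hasDerivWithinAt_nonneg hD (fun x hx ↦ (hf x hx).continuousAt.continuousWithinAt)
    (fun x hx ↦ (hf x (interior_subset hx)).hasDerivWithinAt) fun x hx ↦ hf' x (interior_subset hx)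

theorem antitoneOn_of_hasDerivAt_nonpos {D : Set ℝ} (hD : Convex ℝ D) {f f' : ℝ → ℝ}
    (hf : ∀ x ∈ D, HasDerivAt f (f' x) x) (hf' : ∀ x ∈ D, f' x ≤ 0) : AntitoneOn f D :=
  antitoneOn_of_hasDerivWithinAt_nonpos hD (fun x hx ↦ (hf x hx).continuousAt.continuousWithinAt)
    (fun x hx ↦ (hf x (interior_subset hx)).hasDerivWithinAt) fun x hx ↦ hf' x (interior_subset hx)

theorem hasDerivAt_sq {f : ℝ → ℝ} {d x : ℝ} (hf : HasDerivAt f d x) :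
    HasDerivAt (fun y ↦ f y ^ 2) (2 * (f x * d)) x :=
  (hf.fun_pow 2).congr_deriv (by norm_num; ring)

theorem mul_sub_le_image_sub_of_le_hasDerivAt {f f' : ℝ → ℝ} {x y c : ℝ} (hxy : x ≤ y)
    (hf : ∀ t ∈ Icc x y, HasDerivAt f (f' t) t) (hc : ∀ t ∈ Icc x y, c ≤ f' t) :
    c * (y - x) ≤ f y - f x := by
  have hmono : MonotoneOn (fun t ↦ f t - c * t) (Icc x y) :=
    monotoneOn_of_hasDerivAt_nonneg (convex_Icc x y)
      (fun t ht ↦ by simpa using (hf t ht).fun_sub ((hasDerivAt_id t).const_mul c))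
      fun t ht ↦ sub_nonneg.mpr (hc t ht)
  have := hmono (left_mem_Icc.mpr hxy) (right_mem_Icc.mpr hxy) hxy
  linarith

theorem exp_mul_le_of_mul_le_hasDerivAt {f f' : ℝ → ℝ} {x y k : ℝ} (hxy : x ≤ y)
    (hf : ∀ t ∈ Icc x y, HasDerivAt f (f' t) t) (hk : ∀ t ∈ Icc x y, k * f t ≤ f' t) :
    Real.exp (k * (y - x)) * f x ≤ f y := by
  have hmono : MonotoneOn (fun t ↦ Real.exp (-(k * t)) * f t) (Icc x y) := by
    refine monotoneOn_of_hasDerivAt_nonneg (convex_Icc x y)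
      (f' := fun t ↦ Real.exp (-(k * t)) * (f' t - k * f t)) (fun t ht ↦ ?_)
      fun t ht ↦ mul_nonneg (Real.exp_pos _).le (sub_nonneg.mpr (hk t ht))
    have hexp : HasDerivAt (fun t ↦ Real.exp (-(k * t))) (Real.exp (-(k * t)) * -k) t := by
      simpa using ((hasDerivAt_id t).const_mul k).neg.exp
    exact (hexp.fun_mul (hf t ht)).congr_deriv (by ring)
  have h := hmono (left_mem_Icc.mpr hxy) (right_mem_Icc.mpr hxy) hxy
  have h' := mul_le_mul_of_nonneg_left h (Real.exp_pos (k * y)).le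
  simp only at h'
  rwa [← mul_assoc, ← mul_assoc, ← Real.exp_add, ← Real.exp_add, show k * y + -(k * y) = 0 by ring,
    Real.exp_zero, one_mul, show k * y + -(k * x) = k * (y - x) by ring] at h'

theorem AntitoneOn.le_of_tendsto_nhdsGT {f : ℝ → ℝ} {x₀ s l : ℝ} (hf : AntitoneOn f (Ioc x₀ s))
    (hs : x₀ < s) (hlim : Tendsto f (𝓝[>] x₀) (𝓝 l)) : f s ≤ l :=
  ge_of_tendsto hlim <| mem_of_superset (Ioo_mem_nhdsGT hs) fun _ ht ↦
    hf (Ioo_subset_Ioc_self ht) (right_mem_Ioc.mpr hs) ht.2.le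

theorem rpow_half_le_mul_rpow_half_of_le_sq_mul {A B c : ENNReal} (h : A ≤ c ^ 2 * B) :
    A ^ (1 / 2 : ℝ) ≤ c * B ^ (1 / 2 : ℝ) := by
  calc A ^ (1 / 2 : ℝ) ≤ (c ^ 2 * B) ^ (1 / 2 : ℝ) := ENNReal.rpow_le_rpow h (by norm_num)
    _ = c * B ^ (1 / 2 : ℝ) := by
      rw [ENNReal.mul_rpow_of_nonneg _ _ (by norm_num), ← ENNReal.rpow_natCast, ← ENNReal.rpow_mul]
      norm_num

namespace ForbiddenRegion

variable {ψ ψ' Q : ℝ → ℝ} {x₀ b : ℝ}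

theorem monotoneOn_mul_deriv (hψ : ∀ x ∈ Ioc x₀ b, HasDerivAt ψ (ψ' x) x)
    (hψ' : ∀ x ∈ Ioc x₀ b, HasDerivAt ψ' (Q x * ψ x) x) (hQ : ∀ x ∈ Ioc x₀ b, 0 ≤ Q x) :
    MonotoneOn (fun x ↦ ψ x * ψ' x) (Ioc x₀ b) :=
  monotoneOn_of_hasDerivAt_nonneg (convex_Ioc x₀ b) (fun x hx ↦ (hψ x hx).fun_mul (hψ' x hx))
    fun x hx ↦ by nlinarith [mul_nonneg (hQ x hx) (sq_nonneg (ψ x)), sq_nonneg (ψ' x)]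

theorem mul_deriv_nonneg (hψ : ∀ x ∈ Ioc x₀ b, HasDerivAt ψ (ψ' x) x)
    (hψ' : ∀ x ∈ Ioc x₀ b, HasDerivAt ψ' (Q x * ψ x) x) (hQ : ∀ x ∈ Ioc x₀ b, 0 ≤ Q x)
    (hlim : Tendsto ψ (𝓝[>] x₀) (𝓝 0)) : ∀ x ∈ Ioc x₀ b, 0 ≤ ψ x * ψ' x := by
  intro s hs
  by_contra! hneg
  have hsub : Ioc x₀ s ⊆ Ioc x₀ b := Ioc_subset_Ioc_right hs.2
  -- `ψψ' ≤ ψ(s)ψ'(s) < 0` on `(x₀, s]`, so `ψ²` decreases there towards its limit `0`.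
  have hanti : AntitoneOn (fun x ↦ ψ x ^ 2) (Ioc x₀ s) :=
    antitoneOn_of_hasDerivAt_nonpos (convex_Ioc x₀ s) (fun x hx ↦ hasDerivAt_sq (hψ x (hsub hx)))
      fun x hx ↦ by
        have := monotoneOn_mul_deriv hψ hψ' hQ (hsub hx) hs hx.2
        linarith
  have hs0 : ψ s ^ 2 ≤ 0 := hanti.le_of_tendsto_nhdsGT hs.1 (by simpa using hlim.pow 2)
  have : ψ s = 0 := pow_eq_zero_iff two_ne_zero |>.mp (le_antisymm hs0 (sq_nonneg _))
  simp [this] at hneg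

theorem monotoneOn_sq (hψ : ∀ x ∈ Ioc x₀ b, HasDerivAt ψ (ψ' x) x)
    (hψ' : ∀ x ∈ Ioc x₀ b, HasDerivAt ψ' (Q x * ψ x) x) (hQ : ∀ x ∈ Ioc x₀ b, 0 ≤ Q x)
    (hlim : Tendsto ψ (𝓝[>] x₀) (𝓝 0)) : MonotoneOn (fun x ↦ ψ x ^ 2) (Ioc x₀ b) :=
  monotoneOn_of_hasDerivAt_nonneg (convex_Ioc x₀ b) (fun x hx ↦ hasDerivAt_sq (hψ x hx))
    fun x hx ↦ mul_nonneg zero_le_two (mul_deriv_nonneg hψ hψ' hQ hlim x hx)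

theorem monotoneOn_deriv_sq (hψ : ∀ x ∈ Ioc x₀ b, HasDerivAt ψ (ψ' x) x)
    (hψ' : ∀ x ∈ Ioc x₀ b, HasDerivAt ψ' (Q x * ψ x) x) (hQ : ∀ x ∈ Ioc x₀ b, 0 ≤ Q x)
    (hlim : Tendsto ψ (𝓝[>] x₀) (𝓝 0)) : MonotoneOn (fun x ↦ ψ' x ^ 2) (Ioc x₀ b) :=
  monotoneOn_of_hasDerivAt_nonneg (convex_Ioc x₀ b) (fun x hx ↦ hasDerivAt_sq (hψ' x hx))
    fun x hx ↦ by nlinarith [mul_nonneg (hQ x hx) (mul_deriv_nonneg hψ hψ' hQ hlim x hx)]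

theorem deriv_sq_mul_sub_le (hψ : ∀ x ∈ Ioc x₀ b, HasDerivAt ψ (ψ' x) x)
    (hψ' : ∀ x ∈ Ioc x₀ b, HasDerivAt ψ' (Q x * ψ x) x) (hQ : ∀ x ∈ Ioc x₀ b, 0 ≤ Q x)
    (hlim : Tendsto ψ (𝓝[>] x₀) (𝓝 0)) {s t : ℝ} (hs : s ∈ Ioc x₀ b) (ht : t ∈ Ioc x₀ b)
    (hst : s ≤ t) : ψ' s ^ 2 * (t - s) ≤ ψ t * ψ' t - ψ s * ψ' s := by
  have hsub : Icc s t ⊆ Ioc x₀ b := (ordConnected_Ioc).out hs ht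
  refine mul_sub_le_image_sub_of_le_hasDerivAt hst (fun x hx ↦ (hψ x (hsub hx)).fun_mul
    (hψ' x (hsub hx))) fun x hx ↦ ?_
  have := monotoneOn_deriv_sq hψ hψ' hQ hlim hs (hsub hx) hx.1
  nlinarith [mul_nonneg (hQ x (hsub hx)) (sq_nonneg (ψ x))]

theorem mul_deriv_mul_sub_le (hψ : ∀ x ∈ Ioc x₀ b, HasDerivAt ψ (ψ' x) x)
    (hψ' : ∀ x ∈ Ioc x₀ b, HasDerivAt ψ' (Q x * ψ x) x) (hQ : ∀ x ∈ Ioc x₀ b, 0 ≤ Q x)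
    {s t : ℝ} (hs : s ∈ Ioc x₀ b) (ht : t ∈ Ioc x₀ b) (hst : s ≤ t) :
    2 * (ψ s * ψ' s) * (t - s) ≤ ψ t ^ 2 - ψ s ^ 2 := by
  have hsub : Icc s t ⊆ Ioc x₀ b := (ordConnected_Ioc).out hs ht
  refine mul_sub_le_image_sub_of_le_hasDerivAt hst (fun x hx ↦ hasDerivAt_sq (hψ x (hsub hx)))
    fun x hx ↦ ?_
  have := monotoneOn_mul_deriv hψ hψ' hQ hs (hsub hx) hx.1
  linarith

theorem exp_mul_deriv_add_mul_sq_le {q : ℝ} (hψ : ∀ x ∈ Ioc x₀ b, HasDerivAt ψ (ψ' x) x)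
    (hψ' : ∀ x ∈ Ioc x₀ b, HasDerivAt ψ' (Q x * ψ x) x) (hQ : ∀ x ∈ Ioc x₀ b, q ^ 2 ≤ Q x)
    (hlim : Tendsto ψ (𝓝[>] x₀) (𝓝 0)) (hq : 0 ≤ q) {s t : ℝ} (hs : s ∈ Ioc x₀ b)
    (ht : t ∈ Ioc x₀ b) (hst : s ≤ t) :
    Real.exp (2 * q * (t - s)) * (ψ' s + q * ψ s) ^ 2 ≤ (ψ' t + q * ψ t) ^ 2 := by
  have hsub : Icc s t ⊆ Ioc x₀ b := (ordConnected_Ioc).out hs ht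
  have hQ0 : ∀ x ∈ Ioc x₀ b, 0 ≤ Q x := fun x hx ↦ (sq_nonneg q).trans (hQ x hx)
  refine exp_mul_le_of_mul_le_hasDerivAt hst
    (fun x hx ↦ hasDerivAt_sq ((hψ' x (hsub hx)).fun_add ((hψ x (hsub hx)).const_mul q)))
    fun x hx ↦ ?_
  -- The derivative of `(ψ' + qψ)²` exceeds `2q (ψ' + qψ)²` by `2 (Q - q²) (ψψ' + qψ²)`.
  have hpos := mul_nonneg (sub_nonneg.mpr (hQ x (hsub hx)))
    (add_nonneg (mul_deriv_nonneg hψ hψ' hQ0 hlim x (hsub hx)) (mul_nonneg hq (sq_nonneg (ψ x))))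
  nlinarith

theorem sq_add_deriv_sq_le {q a : ℝ} (hψ : ∀ x ∈ Ioc x₀ b, HasDerivAt ψ (ψ' x) x)
    (hψ' : ∀ x ∈ Ioc x₀ b, HasDerivAt ψ' (Q x * ψ x) x) (hQ : ∀ x ∈ Ioc x₀ b, q ^ 2 ≤ Q x)
    (hlim : Tendsto ψ (𝓝[>] x₀) (𝓝 0)) (hq : 0 < q) (hq1 : q ≤ 1) (hqa : 1 ≤ q * a)
    (ha : x₀ < a) (hb : 4 * a ≤ b) :
    ∀ x ∈ Ioc x₀ a, ψ x ^ 2 + ψ' x ^ 2 ≤ 3 * Real.exp (-(2 * q * a)) * ψ (4 * a) ^ 2 := by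
  intro x hx
  have ha0 : 0 < a := pos_of_mul_pos_right (by linarith) hq.le
  have hQ0 : ∀ x ∈ Ioc x₀ b, 0 ≤ Q x := fun x hx ↦ (sq_nonneg q).trans (hQ x hx)
  have hmem : ∀ c : ℝ, 1 ≤ c → c ≤ 4 → c * a ∈ Ioc x₀ b := fun c hc1 hc4 ↦
    ⟨by nlinarith, by nlinarith⟩
  have h1a := hmem 1 le_rfl (by norm_num)
  have h2a := hmem 2 (by norm_num) (by norm_num)
  have h3a := hmem 3 (by norm_num) (by norm_num)
  have h4a := hmem 4 (by norm_num) le_rfl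
  rw [one_mul] at h1a
  have hxb : x ∈ Ioc x₀ b := ⟨hx.1, by linarith [hx.2]⟩
  set W := ψ (4 * a) ^ 2
  have hmono : ψ x ^ 2 + ψ' x ^ 2 ≤ ψ a ^ 2 + ψ' a ^ 2 :=
    add_le_add (monotoneOn_sq hψ hψ' hQ0 hlim hxb h1a hx.2)
      (monotoneOn_deriv_sq hψ hψ' hQ0 hlim hxb h1a hx.2)
  have hstart : q ^ 2 * (ψ a ^ 2 + ψ' a ^ 2) ≤ (ψ' a + q * ψ a) ^ 2 := by
    nlinarith [mul_nonneg (sub_nonneg.mpr (pow_le_one₀ hq.le hq1 : q ^ 2 ≤ 1)) (sq_nonneg (ψ' a)),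
      mul_nonneg hq.le (mul_deriv_nonneg hψ hψ' hQ0 hlim a h1a)]
  have hgrow : Real.exp (2 * q * a) * (ψ' a + q * ψ a) ^ 2 ≤ (ψ' (2 * a) + q * ψ (2 * a)) ^ 2 := by
    have := exp_mul_deriv_add_mul_sq_le hψ hψ' hQ hlim hq.le h1a h2a (by linarith)
    rwa [show 2 * a - a = a by ring] at this
  have hslope₁ : ψ' (2 * a) ^ 2 * a ≤ ψ (3 * a) * ψ' (3 * a) := by
    have := deriv_sq_mul_sub_le hψ hψ' hQ0 hlim h2a h3a (by linarith)
    rw [show 3 * a - 2 * a = a by ring] at this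
    linarith [mul_deriv_nonneg hψ hψ' hQ0 hlim _ h2a]
  have hslope₂ : 2 * (ψ (3 * a) * ψ' (3 * a)) * a ≤ W := by
    have := mul_deriv_mul_sub_le hψ hψ' hQ0 h3a h4a (by linarith)
    rw [show 4 * a - 3 * a = a by ring] at this
    linarith [sq_nonneg (ψ (3 * a))]
  have hderiv : 2 * ψ' (2 * a) ^ 2 ≤ q ^ 2 * W := by
    have hW : W ≤ (q * a) ^ 2 * W := le_mul_of_one_le_left (sq_nonneg _) (one_le_pow₀ hqa)
    have : 2 * ψ' (2 * a) ^ 2 * a ^ 2 ≤ q ^ 2 * W * a ^ 2 := by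
      nlinarith [mul_le_mul_of_nonneg_left hslope₁ (by positivity : (0 : ℝ) ≤ 2 * a)]
    exact le_of_mul_le_mul_right this (by positivity)
  have hend : (ψ' (2 * a) + q * ψ (2 * a)) ^ 2 ≤ 3 * q ^ 2 * W := by
    have := monotoneOn_sq hψ hψ' hQ0 hlim h2a h4a (by linarith)
    nlinarith [sq_nonneg (ψ' (2 * a) - q * ψ (2 * a))]
  have hexp : Real.exp (-(2 * q * a)) * Real.exp (2 * q * a) = 1 := by
    rw [← Real.exp_add, neg_add_cancel, Real.exp_zero]
  have : q ^ 2 * (Real.exp (2 * q * a) * (ψ a ^ 2 + ψ' a ^ 2)) ≤ q ^ 2 * (3 * W) := by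
    nlinarith [mul_le_mul_of_nonneg_left hstart (Real.exp_pos (2 * q * a)).le]
  have := le_of_mul_le_mul_left this (by positivity)
  calc ψ x ^ 2 + ψ' x ^ 2 ≤ ψ a ^ 2 + ψ' a ^ 2 := hmono
    _ = Real.exp (-(2 * q * a)) * (Real.exp (2 * q * a) * (ψ a ^ 2 + ψ' a ^ 2)) := by
      rw [← mul_assoc, hexp, one_mul]
    _ ≤ 3 * Real.exp (-(2 * q * a)) * W := by
      nlinarith [mul_le_mul_of_nonneg_left this (Real.exp_pos (-(2 * q * a))).le]

theorem lintegral_Ioo_le {q a : ℝ} (hψ : ∀ x ∈ Ioc x₀ (5 * a), HasDerivAt ψ (ψ' x) x)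
    (hψ' : ∀ x ∈ Ioc x₀ (5 * a), HasDerivAt ψ' (Q x * ψ x) x)
    (hQ : ∀ x ∈ Ioc x₀ (5 * a), q ^ 2 ≤ Q x) (hlim : Tendsto ψ (𝓝[>] x₀) (𝓝 0)) (hq : 0 < q)
    (hq1 : q ≤ 1) (hqa : 1 ≤ q * a) (hx₀ : 0 ≤ x₀) (ha : x₀ < a) :
    ∫⁻ x in Ioo x₀ a, ENNReal.ofReal (ψ x ^ 2 + ψ' x ^ 2)
      ≤ ENNReal.ofReal (3 * Real.exp (-(2 * q * a))) *
        ∫⁻ x in Ioi x₀, ENNReal.ofReal (ψ x ^ 2) := by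
  have hpt := sq_add_deriv_sq_le hψ hψ' hQ hlim hq hq1 hqa ha (by linarith)
  have hQ0 : ∀ x ∈ Ioc x₀ (5 * a), 0 ≤ Q x := fun x hx ↦ (sq_nonneg q).trans (hQ x hx)
  set W := ψ (4 * a) ^ 2
  have hmass : ENNReal.ofReal W * ENNReal.ofReal a ≤ ∫⁻ x in Ioi x₀, ENNReal.ofReal (ψ x ^ 2) :=
    calc ENNReal.ofReal W * ENNReal.ofReal a = ∫⁻ _ in Ioo (4 * a) (5 * a), ENNReal.ofReal W := by
          rw [setLIntegral_const, Real.volume_Ioo]; ring_nf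
      _ ≤ ∫⁻ x in Ioo (4 * a) (5 * a), ENNReal.ofReal (ψ x ^ 2) :=
          setLIntegral_mono' measurableSet_Ioo fun x hx ↦ ENNReal.ofReal_le_ofReal <|
            monotoneOn_sq hψ hψ' hQ0 hlim ⟨by linarith, by linarith⟩
              ⟨by linarith [hx.1], hx.2.le⟩ hx.1.le
      _ ≤ ∫⁻ x in Ioi x₀, ENNReal.ofReal (ψ x ^ 2) :=
          lintegral_mono_set fun x hx ↦ show x₀ < x by linarith [hx.1]
  calc ∫⁻ x in Ioo x₀ a, ENNReal.ofReal (ψ x ^ 2 + ψ' x ^ 2)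
      ≤ ∫⁻ _ in Ioo x₀ a, ENNReal.ofReal (3 * Real.exp (-(2 * q * a)) * W) :=
        setLIntegral_mono' measurableSet_Ioo fun x hx ↦
          ENNReal.ofReal_le_ofReal (hpt x (Ioo_subset_Ioc_self hx))
    _ = ENNReal.ofReal (3 * Real.exp (-(2 * q * a)) * W) * ENNReal.ofReal (a - x₀) := by
        rw [setLIntegral_const, Real.volume_Ioo]
    _ ≤ ENNReal.ofReal (3 * Real.exp (-(2 * q * a)) * W) * ENNReal.ofReal a := by
        gcongr; linarith
    _ = ENNReal.ofReal (3 * Real.exp (-(2 * q * a))) * (ENNReal.ofReal W * ENNReal.ofReal a) := by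
        rw [ENNReal.ofReal_mul (by positivity), mul_assoc]
    _ ≤ _ := by gcongr

end ForbiddenRegion

theorem IsEigenfunction.hasDerivAt {W : ℝ → ℝ} {x₀ lam x : ℝ} {ψ : ℝ → ℝ}
    (h : IsEigenfunction W x₀ lam ψ) (hx : x ∈ Ioi x₀) : HasDerivAt ψ (deriv ψ x) x :=
  ((h.2.1.differentiableOn (by norm_num)).differentiableAt (isOpen_Ioi.mem_nhds hx)).hasDerivAt

theorem IsEigenfunction.hasDerivAt_deriv {W : ℝ → ℝ} {x₀ lam x : ℝ} {ψ : ℝ → ℝ}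
    (h : IsEigenfunction W x₀ lam ψ) (hx : x ∈ Ioi x₀) :
    HasDerivAt (deriv ψ) ((W x - lam) * ψ x) x := by
  have hψ' : ContDiffOn ℝ 1 (deriv ψ) (Ioi x₀) := h.2.1.deriv_of_isOpen isOpen_Ioi (by norm_num)
  have := ((hψ'.differentiableOn (by norm_num)).differentiableAt
    (isOpen_Ioi.mem_nhds hx)).hasDerivAt
  rwa [show deriv (deriv ψ) x = (W x - lam) * ψ x by linear_combination -h.2.2.2.2.2.2 x hx] at this

theorem sq_div_le_Vtil_sub {M m E C K lam x : ℝ} {L : ℕ} {E1 E2 : ℝ → ℝ} (hC : 0 ≤ C)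
    (hK : 2 * M * m ^ 2 + C ≤ K) (hK0 : 0 < K) (hL : 0 < (L : ℝ)) (hx : 0 < x)
    (hxL : x ≤ (L : ℝ) ^ 2 / (2 * K)) (hE1 : |E1 x| ≤ C * Real.log x / x ^ 2)
    (hE2 : |E2 x| ≤ 1 / 10) (hlam : lam ≤ 0) : (K / L) ^ 2 ≤ Vtil M m E L E1 E2 x - lam := by
  have hE1' : -(C / x) ≤ E1 x := by
    have : C * Real.log x / x ^ 2 ≤ C / x := by
      rw [div_le_div_iff₀ (by positivity) hx]
      nlinarith [mul_le_mul_of_nonneg_left (Real.log_le_sub_one_of_pos hx) hC]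
    linarith [neg_abs_le (E1 x)]
  have hcent : 9 / 10 * ((L : ℝ) ^ 2 / x ^ 2)
      ≤ ((L : ℝ) * ((L : ℝ) + 1) + E ^ 2 * m ^ 2) / x ^ 2 * (1 + E2 x) := by
    have hL2 : (L : ℝ) ^ 2 / x ^ 2 ≤ ((L : ℝ) * ((L : ℝ) + 1) + E ^ 2 * m ^ 2) / x ^ 2 := by
      gcongr; nlinarith [sq_nonneg (E * m)]
    have := (abs_le.mp hE2).1
    nlinarith [(by positivity : (0 : ℝ) ≤ (L : ℝ) ^ 2 / x ^ 2)]
  have hcoul : -(K / x) ≤ -(2 * M * m ^ 2) / x - C / x := by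
    have := div_le_div_of_nonneg_right hK hx.le
    rw [add_div] at this
    rw [neg_div]
    linarith
  have hdom : (K / L) ^ 2 ≤ -(K / x) + 9 / 10 * ((L : ℝ) ^ 2 / x ^ 2) := by
    have hKx : K * x ≤ (L : ℝ) ^ 2 / 2 := by
      rw [le_div_iff₀ (by positivity)] at hxL; linarith
    rw [← sub_nonneg]
    have : -(K / x) + 9 / 10 * ((L : ℝ) ^ 2 / x ^ 2) - (K / L) ^ 2
        = (9 / 10 * (L : ℝ) ^ 4 - K * x * (L : ℝ) ^ 2 - (K * x) ^ 2) / ((L : ℝ) ^ 2 * x ^ 2) := by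
      field_simp; ring
    rw [this]
    apply div_nonneg _ (by positivity)
    nlinarith [mul_le_mul hKx hKx (by positivity) (by positivity)]
  unfold Vtil
  linarith

theorem three_mul_exp_neg_le_exp_sq {t : ℝ} (ht : 20 ≤ t) :
    3 * Real.exp (-(t / 5)) ≤ Real.exp (-(1 / 20 * t)) ^ 2 := by
  have h3 : 3 ≤ Real.exp (t / 10) := by linarith [Real.add_one_le_exp (t / 10)]
  calc 3 * Real.exp (-(t / 5)) ≤ Real.exp (t / 10) * Real.exp (-(t / 5)) := by gcongr
    _ = Real.exp (-(1 / 20 * t)) ^ 2 := by rw [← Real.exp_add, sq, ← Real.exp_add]; ring_nf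

theorem statement9 (M m E C : ℝ) (hM : 0 < M) (hC : 0 < C) :
    ∃ c₁ c₂ : ℝ, 0 < c₁ ∧ 0 < c₂ ∧
    ∀ x₀ : ℝ, 2 ≤ x₀ → ∃ L₀ : ℕ, ∀ L : ℕ, L₀ ≤ L →
    ∀ E1 E2 : ℝ → ℝ,
      (∀ x : ℝ, x₀ < x → |E1 x| ≤ C * Real.log x / x ^ 2) →
      (∀ x : ℝ, x₀ < x → |E2 x| ≤ min (1 / 10) (C * Real.log x / x)) →
    ∀ lam : ℝ, lam ≤ 0 →
    ∀ ψ : ℝ → ℝ, IsEigenfunction (Vtil M m E L E1 E2) x₀ lam ψ →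
    (∫⁻ x in Set.Ioo x₀ (c₁ * (L : ℝ) ^ 2),
        ENNReal.ofReal (ψ x ^ 2 + deriv ψ x ^ 2)) ^ ((1 : ℝ) / 2)
      ≤ ENNReal.ofReal (Real.exp (-(c₂ * (L : ℝ)))) *
        (∫⁻ x in Set.Ioi x₀, ENNReal.ofReal (ψ x ^ 2)) ^ ((1 : ℝ) / 2) := by
  obtain ⟨K, hK_def⟩ : ∃ K, 2 * M * m ^ 2 + C = K := ⟨_, rfl⟩
  have hK : 0 < K := hK_def ▸ by positivity
  -- `L₀` is chosen so that `x₀ < a`, `q = K/L ≤ 1`, `q a = L/10 ≥ 1` and `L ≥ 20`.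
  refine ⟨1 / (10 * K), 1 / 20, by positivity, by norm_num, fun x₀ hx₀ ↦
    ⟨⌈10 * K * x₀ + K + 20⌉₊, fun L hL E1 E2 hE1 hE2 lam hlam ψ hψ ↦ ?_⟩⟩
  have hL' : 10 * K * x₀ + K + 20 ≤ L := Nat.ceil_le.mp hL
  have hKL : K + 20 ≤ L := by nlinarith
  have hL20 : 20 ≤ (L : ℝ) := by linarith
  have hL0 : 0 < (L : ℝ) := by linarith
  set a := 1 / (10 * K) * (L : ℝ) ^ 2 with ha
  have hqa : K / L * a = L / 10 := by rw [ha]; field_simp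
  have h5a : 5 * a = (L : ℝ) ^ 2 / (2 * K) := by rw [ha]; field_simp; ring
  have hx₀a : x₀ < a := by
    rw [ha, one_div, inv_mul_eq_div, lt_div_iff₀ (by positivity)]
    nlinarith
  have hlim : Tendsto ψ (𝓝[>] x₀) (𝓝 0) := hψ.2.2.2.2.2.1
  have hbound := ForbiddenRegion.lintegral_Ioo_le (ψ' := deriv ψ)
    (Q := fun x ↦ Vtil M m E L E1 E2 x - lam) (fun x hx ↦ hψ.hasDerivAt hx.1)
    (fun x hx ↦ hψ.hasDerivAt_deriv hx.1)
    (fun x hx ↦ sq_div_le_Vtil_sub hC.le hK_def.le hK hL0 (by linarith [hx.1]) (h5a ▸ hx.2)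
      (hE1 x hx.1) ((hE2 x hx.1).trans (min_le_left _ _)) hlam)
    hlim (by positivity) ((div_le_one hL0).mpr (by linarith)) (by rw [hqa]; linarith)
    (by linarith) hx₀a
  refine rpow_half_le_mul_rpow_half_of_le_sq_mul (hbound.trans ?_)
  gcongr
  rw [← ENNReal.ofReal_pow (Real.exp_pos _).le]
  refine ENNReal.ofReal_le_ofReal (le_trans (le_of_eq ?_) (three_mul_exp_neg_le_exp_sq hL20))
  rw [mul_assoc, hqa]
  ring_nf
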